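/- (The entropic value functions recover the risk-neutral value functions as β → 0.) For every policy π, every h ∈ {1,…,H+1}, and every state s ∈ S, the map β ↦ V^π_{h,β}(s), defined for β ≠ 0 by the entropic backward recursion with risk parameter β, tends to the risk-neutral value Ṽ^π_h(s) as β → 0 along β ≠ 0. -/

import Mathlib

open Real Filter Finset

namespace RiskMDP

variable {S A : Type*} [Fintype S] [Fintype A]

/-- Entropic value function of policy `pol`, by remaining-steps fuel:
`entV β r P pol H n s = V^pol_h(s)` with `h = H + 1 - n`. -/
noncomputable def entV (β : ℝ) (r : ℕ → S → A → ℝ) (P : ℕ → S → A → PMF S)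
    (pol : ℕ → S → A) (H : ℕ) : ℕ → S → ℝ
  | 0, _ => 0
  | n + 1, s =>
      r (H - n) s (pol (H - n) s) +
        (1 / β) * Real.log (∑ s' : S, (P (H - n) s (pol (H - n) s) s').toReal *
          Real.exp (β * entV β r P pol H n s'))

/-- Optimal entropic value function, by remaining-steps fuel. -/
noncomputable def entVstar (β : ℝ) (r : ℕ → S → A → ℝ) (P : ℕ → S → A → PMF S)
    (H : ℕ) : ℕ → S → ℝ
  | 0, _ => 0
  | n + 1, s =>
      ⨆ a : A, (r (H - n) s a +
        (1 / β) * Real.log (∑ s' : S, (P (H - n) s a s').toReal *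
          Real.exp (β * entVstar β r P H n s')))

/-- Entropic action-value function of policy `pol` at step `h`. -/
noncomputable def entQ (β : ℝ) (r : ℕ → S → A → ℝ) (P : ℕ → S → A → PMF S)
    (pol : ℕ → S → A) (H : ℕ) (h : ℕ) (s : S) (a : A) : ℝ :=
  r h s a + (1 / β) * Real.log (∑ s' : S, (P h s a s').toReal *
    Real.exp (β * entV β r P pol H (H - h) s'))

/-- Optimal entropic action-value function at step `h`. -/
noncomputable def entQstar (β : ℝ) (r : ℕ → S → A → ℝ) (P : ℕ → S → A → PMF S)
    (H : ℕ) (h : ℕ) (s : S) (a : A) : ℝ :=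
  r h s a + (1 / β) * Real.log (∑ s' : S, (P h s a s').toReal *
    Real.exp (β * entVstar β r P H (H - h) s'))

/-- Risk-neutral value function of policy `pol`, by remaining-steps fuel. -/
noncomputable def rnV (r : ℕ → S → A → ℝ) (P : ℕ → S → A → PMF S)
    (pol : ℕ → S → A) (H : ℕ) : ℕ → S → ℝ
  | 0, _ => 0
  | n + 1, s =>
      r (H - n) s (pol (H - n) s) +
        ∑ s' : S, (P (H - n) s (pol (H - n) s) s').toReal * rnV r P pol H n s'

/-- Risk-neutral optimal value function, by remaining-steps fuel. -/
noncomputable def rnVstar (r : ℕ → S → A → ℝ) (P : ℕ → S → A → PMF S)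
    (H : ℕ) : ℕ → S → ℝ
  | 0, _ => 0
  | n + 1, s =>
      ⨆ a : A, (r (H - n) s a +
        ∑ s' : S, (P (H - n) s a s').toReal * rnVstar r P H n s')

/-- Risk-neutral optimal action-value function at step `h`. -/
noncomputable def rnQstar (r : ℕ → S → A → ℝ) (P : ℕ → S → A → PMF S)
    (H : ℕ) (h : ℕ) (s : S) (a : A) : ℝ :=
  r h s a + ∑ s' : S, (P h s a s').toReal * rnVstar r P H (H - h) s'

/-- PMF on the list of states `(s_h, …, s_{h+n-1})` (so `n` states in total), starting from
state `s` at step `h` and following policy `pol`; built by iterated `PMF.bind`. -/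
noncomputable def traj (P : ℕ → S → A → PMF S) (pol : ℕ → S → A) :
    ℕ → ℕ → S → PMF (List S)
  | 0, _, _ => PMF.pure []
  | n + 1, h, s =>
      ((P h s (pol h s)).bind fun s' => traj P pol n (h + 1) s').map (fun l => s :: l)

/-- Cumulative reward `Σ_i r_{h+i}(s_{h+i}, pol_{h+i}(s_{h+i}))` along a list of states
starting at step `h`. -/
def listReward (r : ℕ → S → A → ℝ) (pol : ℕ → S → A) : ℕ → List S → ℝ
  | _, [] => 0
  | h, s :: l => r h s (pol h s) + listReward r pol (h + 1) l

/-- Cumulative reward `R(τ) = Σ_j r_j(s_j, a_j)` of a partial state–action trajectory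
whose first pair is at step `j`. -/
def pairReward (r : ℕ → S → A → ℝ) : ℕ → List (S × A) → ℝ
  | _, [] => 0
  | j, p :: l => r j p.1 p.2 + pairReward r (j + 1) l

/-- The normalizer `ψ_β`. -/
noncomputable def psi (β : ℝ) (H : ℕ) : ℝ :=
  if 0 < β then 1 / β else Real.exp (-β * H) / β

/-- The cascaded gap `Δ_{h,β}(s, a; τ)`. -/
noncomputable def cgap (β : ℝ) (r : ℕ → S → A → ℝ) (P : ℕ → S → A → PMF S)
    (H : ℕ) (h : ℕ) (s : S) (a : A) (τ : List (S × A)) : ℝ :=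
  psi β H * Real.exp (β * pairReward r 1 τ) *
    (Real.exp (β * entVstar β r P H (H + 1 - h) s) -
      Real.exp (β * entQstar β r P H h s a))

/-!
As `β → 0`, `exp (β x) = 1 + β x + o(β)` and `log (1 + u) = u + o(u)`, so one step of
the entropic Bellman recursion, `(1/β) log 𝔼[exp (β V)]`, tends to `𝔼[V]` whenever `V`
converges.
Induction on the number of remaining steps then carries the limit through the whole horizon.
-/

open Topology

theorem _root_.PMF.sum_toReal_eq_one {α : Type*} [Fintype α] (p : PMF α) :
    ∑ a, (p a).toReal = 1 := by
  rw [← ENNReal.toReal_sum fun a _ => p.apply_ne_top a, ← tsum_fintype (L := .unconditional α),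
    p.tsum_coe, ENNReal.toReal_one]

theorem _root_.HasDerivAt.tendsto_sub_div_comp {α : Type*} {l : Filter α} {φ : ℝ → ℝ}
    {a φ' m : ℝ} {x d : α → ℝ} (hφ : HasDerivAt φ φ' a) (hd : Tendsto d l (𝓝 0))
    (hd₀ : ∀ᶠ t in l, d t ≠ 0) (hx : Tendsto (fun t => (x t - a) / d t) l (𝓝 m)) :
    Tendsto (fun t => (φ (x t) - φ a) / d t) l (𝓝 (φ' * m)) := by
  have hxa : Tendsto x l (𝓝 a) := by
    have : Tendsto (fun t => a + d t * ((x t - a) / d t)) l (𝓝 (a + 0 * m)) :=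
      tendsto_const_nhds.add (hd.mul hx)
    rw [zero_mul, add_zero] at this
    refine this.congr' ?_
    filter_upwards [hd₀] with t ht
    rw [mul_div_cancel₀ _ ht]
    ring
  have hslope : Tendsto (fun t => dslope φ a (x t)) l (𝓝 φ') := by
    have := (continuousAt_dslope_same.2 hφ.differentiableAt).tendsto.comp hxa
    rwa [Function.comp_def, dslope_same, hφ.deriv] at this
  refine (hslope.mul hx).congr fun t => ?_
  rw [← sub_smul_dslope φ a (x t), smul_eq_mul]
  ring

theorem _root_.tendsto_log_sum_exp_div {ι : Type*} [Fintype ι] {p : ι → ℝ}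
    (hp : ∑ i, p i = 1) {g : ι → ℝ → ℝ} {v : ι → ℝ}
    (hg : ∀ i, Tendsto (g i) (𝓝[≠] 0) (𝓝 (v i))) :
    Tendsto (fun β => 1 / β * Real.log (∑ i, p i * Real.exp (β * g i β))) (𝓝[≠] 0)
      (𝓝 (∑ i, p i * v i)) := by
  have hid : Tendsto (fun β : ℝ => β) (𝓝[≠] 0) (𝓝 0) := nhdsWithin_le_nhds
  have hne : ∀ᶠ β : ℝ in 𝓝[≠] 0, β ≠ 0 := self_mem_nhdsWithin
  have hexp : ∀ i, Tendsto (fun β => (Real.exp (β * g i β) - Real.exp 0) / β) (𝓝[≠] 0)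
      (𝓝 (v i)) := fun i => by
    have hgi : Tendsto (fun β => (β * g i β - 0) / β) (𝓝[≠] 0) (𝓝 (v i)) :=
      (hg i).congr' <| by
        filter_upwards [hne] with β hβ
        rw [sub_zero, mul_div_cancel_left₀ _ hβ]
    simpa using (Real.hasDerivAt_exp 0).tendsto_sub_div_comp hid hne hgi
  have hsum : Tendsto (fun β => (∑ i, p i * Real.exp (β * g i β) - 1) / β) (𝓝[≠] 0)
      (𝓝 (∑ i, p i * v i)) := by
    refine (tendsto_finsetSum _ fun i _ => (hexp i).const_mul (p i)).congr fun β => ?_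
    rw [← hp, ← Finset.sum_sub_distrib, Finset.sum_div]
    refine Finset.sum_congr rfl fun i _ => ?_
    rw [Real.exp_zero]
    ring
  simpa [div_eq_inv_mul] using
    (Real.hasDerivAt_log one_ne_zero).tendsto_sub_div_comp hid hne hsum

theorem tendsto_entV_rnV {S A : Type*} [Fintype S] (r : ℕ → S → A → ℝ)
    (P : ℕ → S → A → PMF S) (pol : ℕ → S → A) (H n : ℕ) (s : S) :
    Tendsto (fun β => entV β r P pol H n s) (𝓝[≠] 0) (𝓝 (rnV r P pol H n s)) := by
  induction n generalizing s with
  | zero => exact tendsto_const_nhds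
  | succ n ih =>
    exact tendsto_const_nhds.add <|
      tendsto_log_sum_exp_div (PMF.sum_toReal_eq_one _) fun s' => ih s'

theorem entropic_value_tendsto_riskNeutral_general
    {S A : Type*} [Fintype S]
    (H : ℕ)
    (r : ℕ → S → A → ℝ)
    (P : ℕ → S → A → PMF S) :
    ∀ (pol : ℕ → S → A), ∀ h ∈ Finset.Icc 1 (H + 1), ∀ s : S,
      Filter.Tendsto (fun β : ℝ => entV β r P pol H (H + 1 - h) s)
        (nhdsWithin 0 {0}ᶜ) (nhds (rnV r P pol H (H + 1 - h) s)) :=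
  fun pol h _ s => tendsto_entV_rnV r P pol H (H + 1 - h) s

/-- The entropic value functions recover the risk-neutral value
functions as `β → 0` along `β ≠ 0`. -/
theorem entropic_value_tendsto_riskNeutral
    {S A : Type*} [Fintype S] [Nonempty S] [Fintype A] [Nonempty A]
    (H : ℕ) (hH : 1 ≤ H)
    (r : ℕ → S → A → ℝ) (hr : ∀ h ∈ Finset.Icc 1 H, ∀ s a, 0 ≤ r h s a ∧ r h s a ≤ 1)
    (P : ℕ → S → A → PMF S) :
    ∀ (pol : ℕ → S → A), ∀ h ∈ Finset.Icc 1 (H + 1), ∀ s : S,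
      Filter.Tendsto (fun β : ℝ => entV β r P pol H (H + 1 - h) s)
        (nhdsWithin 0 {0}ᶜ) (nhds (rnV r P pol H (H + 1 - h) s)) :=
  entropic_value_tendsto_riskNeutral_general H r P

end RiskMDP
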